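/- Let I be the uniform C-matroidal ideal of U_{c,n} with 2 ≤ c ≤ n. Then I^(c) ⊆ I^r if and only if r(n−c+1) ≤ n; in particular the monomial x_1 x_2 ··· x_n lies in I^(c), and it lies in I^r exactly when r(n−c+1) ≤ n. -/

import Mathlib

open MvPolynomial

-- Lemma 1: product of elements of an ideal is in the power
lemma prod_mem_pow_card {R : Type*} [CommRing R] {σ : Type*} [DecidableEq σ]
    (S : Finset σ) (P : Ideal R) (f : σ → R) (hf : ∀ i ∈ S, f i ∈ P) :
    ∏ i ∈ S, f i ∈ P ^ S.card := by
  induction S using Finset.induction_on with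
  | empty => simp
  | insert _ _ ha ih =>
    rename_i a s
    rw [Finset.prod_insert ha, Finset.card_insert_of_notMem ha, pow_succ']
    exact Ideal.mul_mem_mul (hf a (Finset.mem_insert_self a s))
      (ih fun i hi => hf i (Finset.mem_insert_of_mem hi))

-- Lemma 3: support condition from power of span of variables
lemma support_of_mem_pow_spanX {k : Type*} [Field k] {n : ℕ} (S : Finset (Fin n)) :
    ∀ (c : ℕ) (f : MvPolynomial (Fin n) k),
      f ∈ (Ideal.span ((fun i => (X i : MvPolynomial (Fin n) k)) '' (S : Set (Fin n)))) ^ c →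
      ∀ d ∈ f.support, c ≤ ∑ i ∈ S, d i := by
  intro c
  induction c with
  | zero => intro f _ d _; exact Nat.zero_le _
  | succ c ih =>
    intro f hf
    rw [pow_succ] at hf
    refine Submodule.mul_induction_on hf ?_ ?_
    · intro m hm q hq d hd
      have hsupp := MvPolynomial.support_mul m q hd
      rw [Finset.mem_add] at hsupp
      obtain ⟨a, ha, b, hb, rfl⟩ := hsupp
      have h1 : c ≤ ∑ i ∈ S, a i := ih m hm a ha
      have h2 : 1 ≤ ∑ i ∈ S, b i := by
        rw [mem_ideal_span_X_image] at hq
        obtain ⟨i, hi, hbi⟩ := hq b hb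
        calc 1 ≤ b i := Nat.one_le_iff_ne_zero.2 hbi
        _ ≤ ∑ i ∈ S, b i := Finset.single_le_sum (fun _ _ => Nat.zero_le _) hi
      have : ∑ i ∈ S, (a + b) i = (∑ i ∈ S, a i) + ∑ i ∈ S, b i := by
        simp [Finsupp.add_apply, Finset.sum_add_distrib]
      omega
    · intro x y hx hy d hd
      rcases Finset.mem_union.1 (MvPolynomial.support_add hd) with h | h
      · exact hx d h
      · exact hy d h

-- Lemma 2: product over a big enough set is in J^r
lemma prod_mem_Jpow {k : Type*} [Field k] {n w : ℕ}
    (J : Ideal (MvPolynomial (Fin n) k))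
    (hJ : ∀ T : Finset (Fin n), T.card = w → (∏ i ∈ T, X i) ∈ J) :
    ∀ (r : ℕ) (U : Finset (Fin n)), r * w ≤ U.card → (∏ i ∈ U, (X i : MvPolynomial (Fin n) k)) ∈ J ^ r := by
  intro r
  induction r with
  | zero => simp
  | succ r ih =>
    intro U hU
    obtain ⟨T, hTU, hT⟩ := Finset.exists_subset_card_eq (le_trans (by nlinarith) hU : w ≤ U.card)
    have hsd : (∏ i ∈ U \ T, (X i : MvPolynomial (Fin n) k)) * ∏ i ∈ T, X i = ∏ i ∈ U, X i :=
      Finset.prod_sdiff hTU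
    rw [← hsd, pow_succ]
    refine Ideal.mul_mem_mul (ih _ ?_) (hJ T hT)
    rw [Finset.card_sdiff_of_subset hTU, hT]
    rw [Nat.succ_mul] at hU; omega

lemma core_mem {k : Type*} [Field k] {n w : ℕ}
    (J : Ideal (MvPolynomial (Fin n) k))
    (hJ : ∀ T : Finset (Fin n), T.card = w → (∏ i ∈ T, X i) ∈ J) :
    ∀ (r : ℕ) (d : Fin n → ℕ), r * w ≤ ∑ i, min (d i) r →
      (∏ i, (X i : MvPolynomial (Fin n) k) ^ d i) ∈ J ^ r := by
  intro r
  induction r with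
  | zero => simp
  | succ r ih =>
    intro d h
    set P := Finset.univ.filter (fun i => 0 < d i) with hPdef
    set A := Finset.univ.filter (fun i => r + 1 ≤ d i) with hAdef
    have hAP : A ⊆ P := by
      intro i hi
      simp only [hAdef, hPdef, Finset.mem_filter, Finset.mem_univ, true_and] at hi ⊢
      omega
    have hPw : w ≤ P.card := by
      have h1 : ∑ i, min (d i) (r + 1) = ∑ i ∈ P, min (d i) (r + 1) := by
        refine (Finset.sum_subset (Finset.subset_univ P) ?_).symm
        intro i _ hi
        simp only [hPdef, Finset.mem_filter, Finset.mem_univ, true_and, not_lt,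
          Nat.le_zero] at hi
        simp [hi]
      have h2 : ∑ i ∈ P, min (d i) (r + 1) ≤ P.card * (r + 1) := by
        simpa [mul_comm] using
          Finset.sum_le_card_nsmul P _ (r + 1) (fun i _ => min_le_right _ _)
      have h3 : w * (r + 1) ≤ P.card * (r + 1) := by
        calc w * (r + 1) = (r + 1) * w := mul_comm _ _
          _ ≤ ∑ i, min (d i) (r + 1) := h
          _ = ∑ i ∈ P, min (d i) (r + 1) := h1
          _ ≤ P.card * (r + 1) := h2
      exact Nat.le_of_mul_le_mul_right h3 (Nat.succ_pos r)
    -- choose T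
    obtain ⟨T, hTP, hTcard, hcase⟩ :
        ∃ T : Finset (Fin n), T ⊆ P ∧ T.card = w ∧
          ((∀ i ∈ T, r + 1 ≤ d i) ∨ (∀ i ∉ T, d i ≤ r)) := by
      by_cases hA : w ≤ A.card
      · obtain ⟨T, hTA, hT⟩ := Finset.exists_subset_card_eq hA
        refine ⟨T, hTA.trans hAP, hT, Or.inl fun i hi => ?_⟩
        have := hTA hi
        simp only [hAdef, Finset.mem_filter] at this
        exact this.2
      · obtain ⟨T, hAT, hTP, hT⟩ :=
          Finset.exists_subsuperset_card_eq hAP (le_of_not_ge hA) hPw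
        refine ⟨T, hTP, hT, Or.inr fun i hi => ?_⟩
        by_contra hdi
        exact hi (hAT (by simp [hAdef]; omega))
    have hT1 : ∀ i ∈ T, 1 ≤ d i := by
      intro i hi
      have := hTP hi
      simp only [hPdef, Finset.mem_filter, Finset.mem_univ, true_and] at this
      omega
    set d' : Fin n → ℕ := fun i => if i ∈ T then d i - 1 else d i with hd'def
    have hfac : (∏ i, (X i : MvPolynomial (Fin n) k) ^ d i)
        = (∏ i ∈ T, X i) * ∏ i, X i ^ d' i := by
      have : ∀ i ∈ Finset.univ, (X i : MvPolynomial (Fin n) k) ^ d i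
          = (if i ∈ T then X i else 1) * X i ^ d' i := by
        intro i _
        by_cases hi : i ∈ T
        · simp only [hd'def, hi, if_true]
          conv_rhs => rw [← pow_succ']
          congr 1
          have := hT1 i hi
          omega
        · simp [hd'def, hi]
      rw [Finset.prod_congr rfl this, Finset.prod_mul_distrib]
      congr 1
      simp [Finset.prod_ite_mem, Finset.univ_inter]
    have hsum' : r * w ≤ ∑ i, min (d' i) r := by
      rcases hcase with hbig | hsmall
      · have : ∀ i ∈ T, min (d' i) r = r := by
          intro i hi
          have := hbig i hi
          simp only [hd'def, hi, if_true]
          omega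
        calc r * w = ∑ _i ∈ T, r := by rw [Finset.sum_const, hTcard, smul_eq_mul, mul_comm]
          _ = ∑ i ∈ T, min (d' i) r := (Finset.sum_congr rfl this).symm
          _ ≤ ∑ i, min (d' i) r :=
            Finset.sum_le_sum_of_subset (Finset.subset_univ T)
      · have hpt : ∀ i, min (d i) (r + 1) ≤ min (d' i) r + (if i ∈ T then 1 else 0) := by
          intro i
          by_cases hi : i ∈ T
          · simp only [hd'def, hi, if_true]; omega
          · have := hsmall i hi
            simp only [hd'def, hi, if_false]
            omega
        have hsum2 : ∑ i, min (d i) (r + 1)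
            ≤ (∑ i, min (d' i) r) + T.card := by
          calc ∑ i, min (d i) (r + 1)
              ≤ ∑ i, (min (d' i) r + (if i ∈ T then 1 else 0)) :=
                Finset.sum_le_sum fun i _ => hpt i
            _ = (∑ i, min (d' i) r) + ∑ i, (if i ∈ T then 1 else 0) :=
                Finset.sum_add_distrib
            _ = (∑ i, min (d' i) r) + T.card := by
                congr 1
                simp [Finset.sum_ite_mem, Finset.univ_inter]
        have := h.trans hsum2
        rw [hTcard] at this
        rw [Nat.succ_mul] at this
        omega
    rw [hfac, pow_succ']
    exact Ideal.mul_mem_mul (hJ T hTcard) (ih d' hsum')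

lemma bridge {n c r : ℕ} (hc2 : 2 ≤ c) (hcn : c ≤ n) (hr : 1 ≤ r) (d : Fin n → ℕ)
    (hd : ∀ S : Finset (Fin n), S.card = c → c ≤ ∑ i ∈ S, d i)
    (hrn : r * (n - c + 1) ≤ n) : r * (n - c + 1) ≤ ∑ i, min (d i) r := by
  classical
  set A := Finset.univ.filter (fun i => r ≤ d i) with hAdef
  set B := Finset.univ.filter (fun i => ¬ r ≤ d i) with hBdef
  set Z := Finset.univ.filter (fun i : Fin n => d i = 0) with hZdef
  have hZc : Z.card < c := by
    by_contra hzc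
    push_neg at hzc
    obtain ⟨S, hSZ, hS⟩ := Finset.exists_subset_card_eq hzc
    have := hd S hS
    have hzero : ∑ i ∈ S, d i = 0 := by
      refine Finset.sum_eq_zero fun i hi => ?_
      have := hSZ hi
      simp only [hZdef, Finset.mem_filter] at this
      exact this.2
    omega
  have hABcard : A.card + B.card = n := by
    have := Finset.card_filter_add_card_filter_not
      (s := (Finset.univ : Finset (Fin n))) (p := fun i => r ≤ d i)
    simpa [hAdef, hBdef] using this
  have hsplit : ∑ i ∈ A, min (d i) r + ∑ i ∈ B, min (d i) r = ∑ i, min (d i) r := by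
    have h0 := Finset.sum_filter_add_sum_filter_not Finset.univ (fun i => r ≤ d i)
      (fun i => min (d i) r)
    rw [← hAdef, ← hBdef] at h0
    exact h0
  have hAsum : ∀ i ∈ A, min (d i) r = r := by
    intro i hi
    simp only [hAdef, Finset.mem_filter] at hi
    omega
  have hA_eq : ∑ i ∈ A, min (d i) r = A.card * r := by
    rw [Finset.sum_congr rfl hAsum, Finset.sum_const, smul_eq_mul]
  by_cases hA : n - c + 1 ≤ A.card
  · have : r * (n - c + 1) ≤ A.card * r := by
      calc r * (n - c + 1) = (n - c + 1) * r := mul_comm _ _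
        _ ≤ A.card * r := Nat.mul_le_mul_right r hA
    omega
  · push_neg at hA
    have hBcard : c ≤ B.card := by omega
    have hZB : Z ⊆ B := by
      intro i hi
      simp only [hZdef, Finset.mem_filter] at hi
      simp only [hBdef, Finset.mem_filter, Finset.mem_univ, true_and]
      omega
    obtain ⟨S, hZS, hSB, hScard⟩ :=
      Finset.exists_subsuperset_card_eq hZB (le_of_lt hZc) hBcard
    have hSsum : c ≤ ∑ i ∈ S, min (d i) r := by
      have h1 : ∀ i ∈ S, min (d i) r = d i := by
        intro i hi
        have := hSB hi
        simp only [hBdef, Finset.mem_filter] at this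
        omega
      rw [Finset.sum_congr rfl h1]
      exact hd S hScard
    have hrest : B.card - c ≤ ∑ i ∈ B \ S, min (d i) r := by
      have h1 : ∀ i ∈ B \ S, 1 ≤ min (d i) r := by
        intro i hi
        rw [Finset.mem_sdiff] at hi
        have hiB := hi.1
        have hiZ : i ∉ Z := fun hz => hi.2 (hZS hz)
        simp only [hZdef, Finset.mem_filter, Finset.mem_univ, true_and] at hiZ
        omega
      calc B.card - c = (B \ S).card := by rw [Finset.card_sdiff_of_subset hSB, hScard]
        _ = ∑ _i ∈ B \ S, 1 := by rw [Finset.sum_const, smul_eq_mul, mul_one]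
        _ ≤ ∑ i ∈ B \ S, min (d i) r := Finset.sum_le_sum h1
    have hBsum : c + (B.card - c) ≤ ∑ i ∈ B, min (d i) r := by
      have h2 : ∑ i ∈ B \ S, min (d i) r + ∑ i ∈ S, min (d i) r
          = ∑ i ∈ B, min (d i) r := by
        simpa using Finset.sum_sdiff hSB (f := fun i => min (d i) r)
      omega
    have hAcard_le : A.card ≤ A.card * r := Nat.le_mul_of_pos_right _ hr
    omega

lemma forward_deg {k : Type*} [Field k] {n w r : ℕ}
    (h : (∏ i : Fin n, X i) ∈
      (Ideal.span {f : MvPolynomial (Fin n) k |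
        ∃ T : Finset (Fin n), T.card = w ∧ f = ∏ i ∈ T, X i}) ^ r) :
    r * w ≤ n := by
  set J := Ideal.span {f : MvPolynomial (Fin n) k |
      ∃ T : Finset (Fin n), T.card = w ∧ f = ∏ i ∈ T, X i} with hJdef
  let φ : MvPolynomial (Fin n) k →+* Polynomial k :=
    (aeval (fun _ : Fin n => (Polynomial.X : Polynomial k))).toRingHom
  have hmapJ : Ideal.map φ J ≤ Ideal.span {(Polynomial.X : Polynomial k) ^ w} := by
    rw [hJdef, Ideal.map_span, Ideal.span_le]
    rintro x ⟨f, ⟨T, hT, rfl⟩, rfl⟩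
    have : φ (∏ i ∈ T, X i) = Polynomial.X ^ w := by
      simp only [φ, map_prod, AlgHom.toRingHom_eq_coe, RingHom.coe_coe, aeval_X]
      rw [Finset.prod_const, hT]
    rw [this]
    exact Ideal.subset_span rfl
  have hmem : φ (∏ i : Fin n, X i) ∈ Ideal.span {(Polynomial.X : Polynomial k) ^ (w * r)} := by
    have h1 : φ (∏ i : Fin n, X i) ∈ Ideal.map φ (J ^ r) := Ideal.mem_map_of_mem φ h
    rw [Ideal.map_pow] at h1
    have h2 : (Ideal.map φ J) ^ r ≤ (Ideal.span {(Polynomial.X : Polynomial k) ^ w}) ^ r :=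
      Ideal.pow_right_mono hmapJ r
    rw [Ideal.span_singleton_pow, ← pow_mul] at h2
    exact h2 h1
  have hphi : φ (∏ i : Fin n, X i) = Polynomial.X ^ n := by
    simp only [φ, map_prod, AlgHom.toRingHom_eq_coe, RingHom.coe_coe, aeval_X]
    rw [Finset.prod_const, Finset.card_univ, Fintype.card_fin]
  rw [hphi, Ideal.mem_span_singleton] at hmem
  by_contra hcon
  push_neg at hcon
  rw [Polynomial.X_pow_dvd_iff] at hmem
  have := hmem n (by rw [mul_comm] at hcon; omega)
  simp [Polynomial.coeff_X_pow] at this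

/-- For the uniform C-matroidal ideal `I` of `U_{c,n}` with `2 ≤ c ≤ n`:
`I^(c) ⊆ I^r` iff `r(n-c+1) ≤ n`; moreover `x_1⋯x_n ∈ I^(c)` and `x_1⋯x_n ∈ I^r`
exactly when `r(n-c+1) ≤ n`. -/
theorem uniform_matroidal_cth_symbolic_containment
    (k : Type*) [Field k] (n c : ℕ) (hc : 2 ≤ c) (hcn : c ≤ n) (r : ℕ) (hr : 1 ≤ r) :
    ((⨅ S ∈ {S : Finset (Fin n) | S.card = c},
        (Ideal.span ((fun i => (X i : MvPolynomial (Fin n) k)) '' (S : Set (Fin n)))) ^ c) ≤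
      (Ideal.span {f : MvPolynomial (Fin n) k |
        ∃ T : Finset (Fin n), T.card = n - c + 1 ∧ f = ∏ i ∈ T, X i}) ^ r
      ↔ r * (n - c + 1) ≤ n) ∧
    ((∏ i : Fin n, X i : MvPolynomial (Fin n) k) ∈
      ⨅ S ∈ {S : Finset (Fin n) | S.card = c},
        (Ideal.span ((fun i => (X i : MvPolynomial (Fin n) k)) '' (S : Set (Fin n)))) ^ c) ∧
    ((∏ i : Fin n, X i : MvPolynomial (Fin n) k) ∈
        (Ideal.span {f : MvPolynomial (Fin n) k |
          ∃ T : Finset (Fin n), T.card = n - c + 1 ∧ f = ∏ i ∈ T, X i}) ^ r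
      ↔ r * (n - c + 1) ≤ n) := by
  classical
  set J := Ideal.span {f : MvPolynomial (Fin n) k |
      ∃ T : Finset (Fin n), T.card = n - c + 1 ∧ f = ∏ i ∈ T, X i} with hJdef
  have hJgen : ∀ T : Finset (Fin n), T.card = n - c + 1 →
      (∏ i ∈ T, (X i : MvPolynomial (Fin n) k)) ∈ J :=
    fun T hT => Ideal.subset_span ⟨T, hT, rfl⟩
  -- Part B : the full product is in the symbolic power
  have partB : (∏ i : Fin n, X i : MvPolynomial (Fin n) k) ∈
      ⨅ S ∈ {S : Finset (Fin n) | S.card = c},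
        (Ideal.span ((fun i => (X i : MvPolynomial (Fin n) k)) '' (S : Set (Fin n)))) ^ c := by
    simp only [Ideal.mem_iInf]
    intro S hS
    have hSc : S.card = c := hS
    have h1 : (∏ i ∈ S, (X i : MvPolynomial (Fin n) k)) ∈
        (Ideal.span ((fun i => (X i : MvPolynomial (Fin n) k)) '' (S : Set (Fin n)))) ^ c := by
      rw [← hSc]
      exact prod_mem_pow_card S _ _ fun i hi => Ideal.subset_span ⟨i, hi, rfl⟩
    have h2 : (∏ i ∈ Finset.univ \ S, (X i : MvPolynomial (Fin n) k)) * ∏ i ∈ S, X i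
        = ∏ i : Fin n, X i := Finset.prod_sdiff (Finset.subset_univ S)
    rw [← h2]
    exact Ideal.mul_mem_left _ _ h1
  -- Part C : membership of the full product in J^r iff the degree bound
  have partC : ((∏ i : Fin n, X i : MvPolynomial (Fin n) k) ∈ J ^ r ↔ r * (n - c + 1) ≤ n) := by
    constructor
    · intro h
      exact forward_deg h
    · intro h
      refine prod_mem_Jpow J hJgen r Finset.univ ?_
      simpa using h
  -- Part A
  refine ⟨?_, partB, partC⟩
  constructor
  · intro h
    exact partC.1 (h partB)
  · intro h f hf
    simp only [Ideal.mem_iInf] at hf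
    -- every exponent in the support satisfies the subset-sum condition
    have hsupp : ∀ d ∈ f.support, ∀ S : Finset (Fin n), S.card = c →
        c ≤ ∑ i ∈ S, d i := by
      intro d hd S hS
      exact support_of_mem_pow_spanX S c f (hf S hS) d hd
    -- decompose f into monomials
    rw [← MvPolynomial.support_sum_monomial_coeff f]
    refine Ideal.sum_mem _ fun d hd => ?_
    have hmono : (monomial d (1 : k)) ∈ J ^ r := by
      have hprod : (∏ i : Fin n, (X i : MvPolynomial (Fin n) k) ^ d i) = monomial d 1 := by
        rw [← MvPolynomial.prod_X_pow_eq_monomial]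
        refine (Finset.prod_subset (Finset.subset_univ d.support) ?_).symm
        intro i _ hi
        rw [Finsupp.notMem_support_iff] at hi
        simp [hi]
      rw [← hprod]
      exact core_mem J hJgen r (fun i => d i)
        (bridge hc hcn hr _ (hsupp d hd) h)
    have : (monomial d (f.coeff d)) = C (f.coeff d) * monomial d 1 := by
      rw [C_mul_monomial, mul_one]
    rw [this]
    exact Ideal.mul_mem_left _ _ hmono
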